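/- If a $q$-aggregate sequence $\hat{\mathbf{y}}$ is also idiosyncratic, then $q = 0$, i.e., $\hat{\mathbf{y}}$ is the zero sequence. Consequently, a decomposition $\mathbf{y} = \hat{\mathbf{y}} + \tilde{\mathbf{y}}$ into an orthogonal sum of a $q$-aggregate and an idiosyncratic component is unique. -/

import Mathlib

/-!
An idiosyncratic sequence has bounded top eigenvalues, whereas the `q`-th eigenvalue of a
`q`-aggregate one tends to infinity; hence `q = 0`, and covariance sections of rank `0` force
the sequence to vanish.

For uniqueness, `ŷ₁ j` is a combination `∑ xᵢ ŷ₁ᵢ` with coefficient vectors `x` of arbitrarily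
small norm. Tested against `ỹ₂ k`, the part `∑ xᵢ ŷ₂ᵢ` vanishes and the rest `∑ xᵢ (ỹ₂ᵢ - ỹ₁ᵢ)`
is idiosyncratic, hence `O(‖x‖)`. So `ŷ₁ ⊥ ỹ₂`, symmetrically `ŷ₂ ⊥ ỹ₁`, and
`ŷ₁ k - ŷ₂ k = ỹ₂ k - ỹ₁ k` is orthogonal to itself.
-/

open Filter MeasureTheory Matrix
open scoped RealInnerProductSpace

/-- The `n × n` covariance section of the sequence `v`. -/
noncomputable def covSec {Ω : Type*} [MeasurableSpace Ω] {μ : Measure Ω}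
    (v : ℕ → Lp ℝ 2 μ) (n : ℕ) : Matrix (Fin n) (Fin n) ℝ :=
  Matrix.of fun i j => ⟪v i, v j⟫

/-- The `k`-th largest eigenvalue of a symmetric matrix, via Courant–Fischer. -/
noncomputable def kthEig (n : ℕ) (A : Matrix (Fin n) (Fin n) ℝ) (k : ℕ) : ℝ :=
  sSup {t : ℝ | ∃ V : Submodule ℝ (Fin n → ℝ), Module.finrank ℝ V = k ∧
    ∀ x ∈ V, t * (∑ i, x i ^ 2) ≤ x ⬝ᵥ A.mulVec x}

/-- `v` is `q`-aggregate: its covariance sections have rank `q` and all `q` nonzero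
eigenvalues tend to `+∞`. -/
noncomputable def IsAggregate {Ω : Type*} [MeasurableSpace Ω] {μ : Measure Ω}
    (q : ℕ) (v : ℕ → Lp ℝ 2 μ) : Prop :=
  (∀ n, q ≤ n → (covSec v n).rank = q) ∧
  (∀ k, 1 ≤ k → k ≤ q → Tendsto (fun n => kthEig n (covSec v n) k) atTop atTop)

/-- `v` is idiosyncratic, via the eigenvalue characterization: the top eigenvalues of
its covariance sections stay bounded. -/
def IsIdiosyncraticCov {Ω : Type*} [MeasurableSpace Ω] {μ : Measure Ω}
    (v : ℕ → Lp ℝ 2 μ) : Prop :=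
  ∃ M : ℝ, ∀ (n : ℕ) (x : Fin n → ℝ),
    x ⬝ᵥ (covSec v n).mulVec x ≤ M * ∑ i, x i ^ 2

lemma eq_zero_of_forall_sq_mul_le {c D : ℝ} (h : ∀ N > 0, c ^ 2 * N ≤ D) : c = 0 := by
  by_contra hc
  have hc2 : 0 < c ^ 2 := sq_pos_of_ne_zero hc
  have hN := h ((|D| + 1) / c ^ 2) (div_pos (by positivity) hc2)
  rw [mul_div_cancel₀ _ hc2.ne'] at hN
  linarith [le_abs_self D]

lemma kthEig_le_of_forall_le {n k : ℕ} (hk : k ≠ 0) (A : Matrix (Fin n) (Fin n) ℝ) (M : ℝ)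
    (hM : ∀ x : Fin n → ℝ, x ⬝ᵥ A *ᵥ x ≤ M * ∑ i, x i ^ 2) :
    kthEig n A k ≤ max M 0 := by
  refine Real.sSup_le ?_ (le_max_right _ _)
  rintro t ⟨V, hVk, hV⟩
  have hVne : V ≠ ⊥ := by
    rintro rfl
    exact hk (by simpa using hVk.symm)
  obtain ⟨x, hxV, hx0⟩ := Submodule.exists_mem_ne_zero_of_ne_bot hVne
  have hS : 0 < ∑ i, x i ^ 2 := by
    obtain ⟨i, hi⟩ := Function.ne_iff.mp hx0
    exact Finset.sum_pos' (fun i _ ↦ sq_nonneg _) ⟨i, Finset.mem_univ i, sq_pos_of_ne_zero hi⟩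
  exact (le_of_mul_le_mul_right ((hV x hxV).trans (hM x)) hS).trans (le_max_left _ _)

lemma exists_finrank_eq_of_lt_kthEig {n k : ℕ} {A : Matrix (Fin n) (Fin n) ℝ} {N : ℝ}
    (hN : 0 ≤ N) (h : N < kthEig n A k) :
    ∃ V : Submodule ℝ (Fin n → ℝ), Module.finrank ℝ V = k ∧
      ∀ x ∈ V, N * ∑ i, x i ^ 2 ≤ x ⬝ᵥ A *ᵥ x := by
  by_contra! hV
  refine h.not_ge (Real.sSup_le ?_ hN)
  rintro t ⟨V, hVk, htV⟩
  by_contra! hNt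
  obtain ⟨x, hxV, hx⟩ := hV V hVk
  have hS : 0 ≤ ∑ i, x i ^ 2 := Finset.sum_nonneg fun i _ ↦ sq_nonneg _
  exact hx.not_ge ((mul_le_mul_of_nonneg_right hNt.le hS).trans (htV x hxV))

lemma LinearMap.map_eq_range_of_finrank_eq {K M₁ M₂ : Type*} [DivisionRing K]
    [AddCommGroup M₁] [Module K M₁] [AddCommGroup M₂] [Module K M₂]
    {f : M₁ →ₗ[K] M₂} [FiniteDimensional K (LinearMap.range f)] {V : Submodule K M₁}
    (hV : ∀ x ∈ V, f x = 0 → x = 0)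
    (hrank : Module.finrank K V = Module.finrank K (LinearMap.range f)) :
    V.map f = LinearMap.range f := by
  have hinj : Function.Injective (f.domRestrict V) := by
    rw [← LinearMap.ker_eq_bot, Submodule.eq_bot_iff]
    exact fun x hx ↦ Subtype.ext (hV x x.2 hx)
  refine Submodule.eq_of_le_of_finrank_le LinearMap.map_le_range ?_
  rw [← LinearMap.range_domRestrict, LinearMap.finrank_range_of_inj hinj, hrank]

section Covariance

variable {Ω : Type*} [MeasurableSpace Ω] {μ : Measure Ω}

lemma covSec_mulVec_apply (v : ℕ → Lp ℝ 2 μ) (n : ℕ) (x : Fin n → ℝ) (i : Fin n) :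
    (covSec v n *ᵥ x) i = ⟪v i, Fintype.linearCombination ℝ (fun i : Fin n ↦ v i) x⟫ := by
  simp only [mulVec, dotProduct, covSec, of_apply, Fintype.linearCombination_apply, inner_sum,
    real_inner_smul_right, mul_comm]

lemma dotProduct_covSec_mulVec (v : ℕ → Lp ℝ 2 μ) (n : ℕ) (x : Fin n → ℝ) :
    x ⬝ᵥ covSec v n *ᵥ x = ‖Fintype.linearCombination ℝ (fun i : Fin n ↦ v i) x‖ ^ 2 := by
  rw [← real_inner_self_eq_norm_sq]
  nth_rewrite 1 [Fintype.linearCombination_apply]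
  simp only [dotProduct, covSec_mulVec_apply, sum_inner, real_inner_smul_left]

lemma ker_covSec_mulVecLin (v : ℕ → Lp ℝ 2 μ) (n : ℕ) :
    LinearMap.ker (covSec v n).mulVecLin =
      LinearMap.ker (Fintype.linearCombination ℝ (fun i : Fin n ↦ v i)) := by
  ext x
  simp only [LinearMap.mem_ker, mulVecLin_apply]
  constructor
  · intro h
    have hq := dotProduct_covSec_mulVec v n x
    rw [h, dotProduct_zero] at hq
    simpa using hq.symm
  · intro h
    funext i
    rw [covSec_mulVec_apply, h, inner_zero_right, Pi.zero_apply]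

lemma rank_covSec (v : ℕ → Lp ℝ 2 μ) (n : ℕ) :
    (covSec v n).rank = Module.finrank ℝ (Submodule.span ℝ (Set.range fun i : Fin n ↦ v i)) := by
  have h₁ := LinearMap.finrank_range_add_finrank_ker (covSec v n).mulVecLin
  have h₂ := LinearMap.finrank_range_add_finrank_ker
    (Fintype.linearCombination ℝ (fun i : Fin n ↦ v i))
  rw [ker_covSec_mulVecLin, Fintype.range_linearCombination] at *
  rw [Matrix.rank]
  omega

lemma IsIdiosyncraticCov.exists_norm_sq_le {v : ℕ → Lp ℝ 2 μ} (hv : IsIdiosyncraticCov v) :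
    ∃ M, 0 ≤ M ∧ ∀ (n : ℕ) (x : Fin n → ℝ),
      ‖Fintype.linearCombination ℝ (fun i : Fin n ↦ v i) x‖ ^ 2 ≤ M * ∑ i, x i ^ 2 := by
  obtain ⟨M, hM⟩ := hv
  refine ⟨max M 0, le_max_right _ _, fun n x ↦ ?_⟩
  rw [← dotProduct_covSec_mulVec]
  exact (hM n x).trans (mul_le_mul_of_nonneg_right (le_max_left _ _)
    (Finset.sum_nonneg fun i _ ↦ sq_nonneg _))

lemma IsIdiosyncraticCov.sub {v w : ℕ → Lp ℝ 2 μ} (hv : IsIdiosyncraticCov v)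
    (hw : IsIdiosyncraticCov w) : IsIdiosyncraticCov (v - w) := by
  obtain ⟨M₁, -, hv⟩ := hv.exists_norm_sq_le
  obtain ⟨M₂, -, hw⟩ := hw.exists_norm_sq_le
  refine ⟨2 * (M₁ + M₂), fun n x ↦ ?_⟩
  have hsub : Fintype.linearCombination ℝ (fun i : Fin n ↦ (v - w) i) x =
      Fintype.linearCombination ℝ (fun i : Fin n ↦ v i) x -
        Fintype.linearCombination ℝ (fun i : Fin n ↦ w i) x := by
    simp only [Fintype.linearCombination_apply, Pi.sub_apply, smul_sub, Finset.sum_sub_distrib]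
  rw [dotProduct_covSec_mulVec, hsub]
  have htri := pow_le_pow_left₀ (norm_nonneg _) (norm_sub_le
    (Fintype.linearCombination ℝ (fun i : Fin n ↦ v i) x)
    (Fintype.linearCombination ℝ (fun i : Fin n ↦ w i) x)) 2
  nlinarith [hv n x, hw n x, sq_nonneg (‖Fintype.linearCombination ℝ (fun i : Fin n ↦ v i) x‖ -
    ‖Fintype.linearCombination ℝ (fun i : Fin n ↦ w i) x‖)]

namespace IsAggregate

variable {q : ℕ} {v : ℕ → Lp ℝ 2 μ}

lemma apply_eq_zero (hv : IsAggregate 0 v) (k : ℕ) : v k = 0 := by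
  have hspan := hv.1 (k + 1) (Nat.zero_le _)
  have := Module.Finite.span_of_finite ℝ (Set.finite_range fun i : Fin (k + 1) ↦ v i)
  rw [rank_covSec, Submodule.finrank_eq_zero] at hspan
  have hk : v k ∈ Submodule.span ℝ (Set.range fun i : Fin (k + 1) ↦ v i) :=
    Submodule.subset_span ⟨⟨k, k.lt_succ_self⟩, rfl⟩
  simpa [hspan] using hk

lemma unique {q' : ℕ} (hv : IsAggregate q v) (hv' : IsAggregate q' v) : q = q' :=
  (hv.1 _ (le_max_left q q')).symm.trans (hv'.1 _ (le_max_right q q'))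

lemma eq_zero_of_isIdiosyncraticCov (hv : IsAggregate q v) (hI : IsIdiosyncraticCov v) :
    q = 0 := by
  obtain ⟨M, hM⟩ := hI
  by_contra hq
  obtain ⟨n, hn⟩ := ((hv.2 1 le_rfl (Nat.one_le_iff_ne_zero.mpr hq)).eventually_gt_atTop
    (max M 0)).exists
  exact hn.not_ge (kthEig_le_of_forall_le one_ne_zero _ M (hM n))

/-- The subspace witnessing that the `q`-th eigenvalue exceeds `N` is `q`-dimensional and
expanded by a factor `√N` under the combination map, so by the rank condition it is mapped onto
the whole span of `v 0, …, v (n - 1)`. -/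
lemma exists_linearCombination_eq (hv : IsAggregate q v) (j : ℕ) {N : ℝ} (hN : 0 < N) :
    ∃ (n : ℕ) (x : Fin n → ℝ), Fintype.linearCombination ℝ (fun i : Fin n ↦ v i) x = v j ∧
      N * ∑ i, x i ^ 2 ≤ ‖v j‖ ^ 2 := by
  rcases Nat.eq_zero_or_pos q with rfl | hq
  · exact ⟨0, 0, by rw [map_zero, hv.apply_eq_zero j], by simp⟩
  obtain ⟨n, hNn, hn⟩ := (((hv.2 q hq le_rfl).eventually_gt_atTop N).and
    (eventually_ge_atTop (max (j + 1) q))).exists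
  obtain ⟨V, hVq, hV⟩ := exists_finrank_eq_of_lt_kthEig hN.le hNn
  simp only [dotProduct_covSec_mulVec] at hV
  have hmap : V.map (Fintype.linearCombination ℝ (fun i : Fin n ↦ v i)) =
      LinearMap.range (Fintype.linearCombination ℝ (fun i : Fin n ↦ v i)) := by
    refine LinearMap.map_eq_range_of_finrank_eq (fun x hx h0 ↦ ?_) ?_
    · have hS := hV x hx
      rw [h0, norm_zero, zero_pow two_ne_zero] at hS
      have hS0 : x ⬝ᵥ x ≤ 0 := by
        simpa only [dotProduct, ← sq] using nonpos_of_mul_nonpos_right hS hN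
      exact dotProduct_self_eq_zero.mp
        (le_antisymm hS0 (Finset.sum_nonneg fun i _ ↦ mul_self_nonneg (x i)))
    · rw [hVq, Fintype.range_linearCombination, ← rank_covSec, hv.1 n (le_of_max_le_right hn)]
  have hj : v j ∈ V.map (Fintype.linearCombination ℝ (fun i : Fin n ↦ v i)) := by
    rw [hmap, Fintype.range_linearCombination]
    exact Submodule.subset_span ⟨⟨j, Nat.lt_of_succ_le (le_of_max_le_left hn)⟩, rfl⟩
  obtain ⟨x, hxV, hx⟩ := hj
  exact ⟨n, x, hx, hx ▸ hV x hxV⟩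

lemma inner_eq_zero_of_inner_sub_eq_zero (hv : IsAggregate q v) {e : ℕ → Lp ℝ 2 μ}
    (he : IsIdiosyncraticCov e) {z : Lp ℝ 2 μ} (hz : ∀ i, ⟪v i - e i, z⟫ = 0) (j : ℕ) :
    ⟪v j, z⟫ = 0 := by
  obtain ⟨M, hM, he⟩ := he.exists_norm_sq_le
  refine eq_zero_of_forall_sq_mul_le (D := M * ‖z‖ ^ 2 * ‖v j‖ ^ 2) fun N hN ↦ ?_
  obtain ⟨n, x, hx, hxN⟩ := hv.exists_linearCombination_eq j hN
  set S := ∑ i, x i ^ 2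
  have hve : ⟪v j, z⟫ = ⟪Fintype.linearCombination ℝ (fun i : Fin n ↦ e i) x, z⟫ := by
    rw [← hx]
    simp only [Fintype.linearCombination_apply, sum_inner, real_inner_smul_left]
    refine Finset.sum_congr rfl fun i _ ↦ ?_
    rw [← sub_eq_zero, ← mul_sub, ← inner_sub_left, hz, mul_zero]
  have hsq : ⟪v j, z⟫ ^ 2 ≤ M * S * ‖z‖ ^ 2 := by
    rw [hve, ← abs_sq, abs_pow]
    calc _ ≤ (‖Fintype.linearCombination ℝ (fun i : Fin n ↦ e i) x‖ * ‖z‖) ^ 2 := by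
          gcongr; exact abs_real_inner_le_norm _ _
      _ ≤ M * S * ‖z‖ ^ 2 := by rw [mul_pow]; gcongr; exact he n x
  calc ⟪v j, z⟫ ^ 2 * N ≤ M * S * ‖z‖ ^ 2 * N := by gcongr
    _ = M * ‖z‖ ^ 2 * (N * S) := by ring
    _ ≤ M * ‖z‖ ^ 2 * ‖v j‖ ^ 2 := by gcongr

end IsAggregate

end Covariance

theorem aggregate_idiosyncratic_unique_general
    {Ω : Type*} [MeasurableSpace Ω] (μ : Measure Ω) :
    (∀ (q : ℕ) (v : ℕ → Lp ℝ 2 μ),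
      IsAggregate q v → IsIdiosyncraticCov v → q = 0 ∧ ∀ k, v k = 0) ∧
    (∀ (y : ℕ → Lp ℝ 2 μ) (q₁ q₂ : ℕ)
        (yh₁ yt₁ yh₂ yt₂ : ℕ → Lp ℝ 2 μ),
      IsAggregate q₁ yh₁ → IsIdiosyncraticCov yt₁ →
      (∀ j k, ⟪yh₁ j, yt₁ k⟫ = 0) →
      (∀ k, y k = yh₁ k + yt₁ k) →
      IsAggregate q₂ yh₂ → IsIdiosyncraticCov yt₂ →
      (∀ j k, ⟪yh₂ j, yt₂ k⟫ = 0) →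
      (∀ k, y k = yh₂ k + yt₂ k) →
      q₁ = q₂ ∧ ∀ k, yh₁ k = yh₂ k) := by
  refine ⟨fun q v hA hI ↦ ?_, fun y q₁ q₂ yh₁ yt₁ yh₂ yt₂ hA₁ hI₁ ho₁ hy₁ hA₂ hI₂ ho₂ hy₂ ↦ ?_⟩
  · obtain rfl := hA.eq_zero_of_isIdiosyncraticCov hI
    exact ⟨rfl, hA.apply_eq_zero⟩
  have hd : ∀ k, yh₁ k - yh₂ k = yt₂ k - yt₁ k := fun k ↦ by
    rw [sub_eq_sub_iff_add_eq_add, ← hy₁, hy₂, add_comm]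
  have h₁₂ : ∀ j k, ⟪yh₁ j, yt₂ k⟫ = 0 := fun j k ↦
    hA₁.inner_eq_zero_of_inner_sub_eq_zero (hI₂.sub hI₁)
      (fun i ↦ by rw [Pi.sub_apply, ← hd, sub_sub_cancel, ho₂]) j
  have h₂₁ : ∀ j k, ⟪yh₂ j, yt₁ k⟫ = 0 := fun j k ↦
    hA₂.inner_eq_zero_of_inner_sub_eq_zero (hI₁.sub hI₂)
      (fun i ↦ by
        rw [Pi.sub_apply, ← neg_sub (yt₂ i), ← hd, neg_sub, sub_sub_cancel, ho₁]) j
  have heq : yh₁ = yh₂ := funext fun k ↦ by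
    rw [← sub_eq_zero, ← inner_self_eq_zero (𝕜 := ℝ)]
    nth_rewrite 2 [hd]
    simp only [inner_sub_left, inner_sub_right, h₁₂, h₂₁, ho₁, ho₂, sub_zero]
  subst heq
  exact ⟨hA₁.unique hA₂, fun _ ↦ rfl⟩

/-- a `q`-aggregate sequence which is also idiosyncratic must be zero
(`q = 0`); consequently an orthogonal decomposition `y = ŷ + ỹ` into a `q`-aggregate
plus an idiosyncratic component is unique. -/
theorem aggregate_idiosyncratic_unique
    {Ω : Type*} [MeasurableSpace Ω] (μ : Measure Ω) [IsProbabilityMeasure μ] :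
    (∀ (q : ℕ) (v : ℕ → Lp ℝ 2 μ),
      IsAggregate q v → IsIdiosyncraticCov v → q = 0 ∧ ∀ k, v k = 0) ∧
    (∀ (y : ℕ → Lp ℝ 2 μ) (q₁ q₂ : ℕ)
        (yh₁ yt₁ yh₂ yt₂ : ℕ → Lp ℝ 2 μ),
      IsAggregate q₁ yh₁ → IsIdiosyncraticCov yt₁ →
      (∀ j k, ⟪yh₁ j, yt₁ k⟫ = 0) →
      (∀ k, y k = yh₁ k + yt₁ k) →
      IsAggregate q₂ yh₂ → IsIdiosyncraticCov yt₂ →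
      (∀ j k, ⟪yh₂ j, yt₂ k⟫ = 0) →
      (∀ k, y k = yh₂ k + yt₂ k) →
      q₁ = q₂ ∧ ∀ k, yh₁ k = yh₂ k) :=
  aggregate_idiosyncratic_unique_general μ
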